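/- arXiv:2104.05093 — 3 statements merged into one kernel-verified Lean document; each statement's English description precedes it below -/
import Mathlib

section
/- Let S be a sum of finitely many independent geometric random variables (possibly with different parameters α_i ∈ [0,1)). Then the distribution of S is log-concave: for every integer t ≥ 1, P(S = t+1) · P(S = t-1) ≤ P(S = t)^2. -/
/-!
Convolving a nonnegative sequence with the geometric law `(a ^ k * (1 - a))ₖ` gives the sequence
`q` with `q (t + 1) = (1 - a) * p (t + 1) + a * q t`. This recursion shows that the property
`p (n + 1) * p m ≤ p n * p (m + 1)` for `m ≤ n` (log-concavity without internal zeros) passes from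
`p` to `q`. The law of `∑ i, Y i` is built from the point mass at `0` by one such convolution per
summand, so it has this property, which at `n = t`, `m = t - 1` is the claim.
-/

open MeasureTheory ProbabilityTheory Finset

def CrossLogConcave (p : ℕ → ℝ) : Prop :=
  ∀ n m, m ≤ n → p (n + 1) * p m ≤ p n * p (m + 1)

lemma CrossLogConcave.mul_le_mul_add {p : ℕ → ℝ} (hp : CrossLogConcave p) (k : ℕ) :
    ∀ n m, m ≤ n → p (n + k) * p m ≤ p n * p (m + k) := by
  induction k with
  | zero => intro n m _; rw [add_zero, add_zero, mul_comm]
  | succ k ih =>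
    intro n m hmn
    rcases hmn.eq_or_lt with rfl | hlt
    · exact (mul_comm _ _).le
    · calc p (n + (k + 1)) * p m = p (n + k + 1) * p m := by rw [add_assoc]
        _ ≤ p (n + k) * p (m + 1) := hp _ _ (by omega)
        _ ≤ p n * p (m + 1 + k) := ih _ _ hlt
        _ = p n * p (m + (k + 1)) := by rw [add_right_comm, add_assoc]

def geomConv (a : ℝ) (p : ℕ → ℝ) (t : ℕ) : ℝ :=
  ∑ k ∈ range (t + 1), a ^ k * (1 - a) * p (t - k)

lemma geomConv_succ (a : ℝ) (p : ℕ → ℝ) (t : ℕ) :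
    geomConv a p (t + 1) = (1 - a) * p (t + 1) + a * geomConv a p t := by
  rw [geomConv, sum_range_succ', add_comm, geomConv, mul_sum]
  congr 1
  · simp
  · refine sum_congr rfl fun k _ => ?_
    rw [Nat.add_sub_add_right, pow_succ]
    ring

section GeomConv

variable {a : ℝ} {p : ℕ → ℝ}

lemma geomConv_nonneg (ha₀ : 0 ≤ a) (ha₁ : a ≤ 1) (hp : ∀ k, 0 ≤ p k) (t : ℕ) :
    0 ≤ geomConv a p t :=
  sum_nonneg fun k _ => mul_nonneg (mul_nonneg (pow_nonneg ha₀ k) (sub_nonneg.2 ha₁)) (hp _)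

lemma CrossLogConcave.mul_geomConv_le (hp : CrossLogConcave p) (ha₀ : 0 ≤ a) (ha₁ : a ≤ 1)
    (hp₀ : ∀ k, 0 ≤ p k) {n m : ℕ} (hmn : m ≤ n) :
    p (n + 1) * geomConv a p m ≤ p (m + 1) * geomConv a p n := by
  have hw : ∀ k, 0 ≤ a ^ k * (1 - a) := fun k => mul_nonneg (pow_nonneg ha₀ k) (sub_nonneg.2 ha₁)
  rw [geomConv, geomConv, mul_sum, mul_sum]
  calc ∑ k ∈ range (m + 1), p (n + 1) * (a ^ k * (1 - a) * p (m - k))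
      ≤ ∑ k ∈ range (m + 1), p (m + 1) * (a ^ k * (1 - a) * p (n - k)) := by
        refine sum_le_sum fun k hk => ?_
        have hkm : k ≤ m := Nat.lt_succ_iff.1 (mem_range.1 hk)
        have key : p (n + 1) * p (m - k) ≤ p (m + 1) * p (n - k) := by
          have h := hp.mul_le_mul_add (n - m) (m + 1) (m - k) (by omega)
          rwa [show m + 1 + (n - m) = n + 1 by omega, show m - k + (n - m) = n - k by omega] at h
        calc p (n + 1) * (a ^ k * (1 - a) * p (m - k))
            = a ^ k * (1 - a) * (p (n + 1) * p (m - k)) := by ring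
          _ ≤ a ^ k * (1 - a) * (p (m + 1) * p (n - k)) := mul_le_mul_of_nonneg_left key (hw k)
          _ = p (m + 1) * (a ^ k * (1 - a) * p (n - k)) := by ring
    _ ≤ ∑ k ∈ range (n + 1), p (m + 1) * (a ^ k * (1 - a) * p (n - k)) :=
        sum_le_sum_of_subset_of_nonneg (range_subset_range.2 (by omega))
          fun k _ _ => mul_nonneg (hp₀ _) (mul_nonneg (hw k) (hp₀ _))

lemma CrossLogConcave.geomConv (hp : CrossLogConcave p) (ha₀ : 0 ≤ a) (ha₁ : a ≤ 1)
    (hp₀ : ∀ k, 0 ≤ p k) : CrossLogConcave (geomConv a p) := by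
  intro n m hmn
  rw [geomConv_succ, geomConv_succ]
  have hcross := hp.mul_geomConv_le ha₀ ha₁ hp₀ hmn
  have hqm := geomConv_nonneg ha₀ ha₁ hp₀ m
  have hqn := geomConv_nonneg ha₀ ha₁ hp₀ n
  have hb : 0 ≤ 1 - a := sub_nonneg.2 ha₁
  nlinarith [mul_le_mul_of_nonneg_left hcross hb, mul_nonneg ha₀ hb]

end GeomConv

section Probability

variable {Ω : Type*} [MeasurableSpace Ω] {μ : Measure Ω}

lemma measureReal_add_eq_sum_mul [IsFiniteMeasure μ] {X Z : Ω → ℕ} (hX : Measurable X)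
    (hZ : Measurable Z) (hXZ : IndepFun X Z μ) (t : ℕ) :
    μ.real {ω | X ω + Z ω = t} =
      ∑ k ∈ range (t + 1), μ.real {ω | X ω = k} * μ.real {ω | Z ω = t - k} := by
  have hfibres : {ω | X ω + Z ω = t} =
      ⋃ k ∈ range (t + 1), ({ω | X ω = k} ∩ {ω | Z ω = t - k}) := by
    ext ω
    simp only [Set.mem_ofPred_eq, Set.mem_iUnion, Set.mem_inter_iff, mem_range]
    constructor
    · intro h; exact ⟨X ω, by omega, rfl, by omega⟩
    · rintro ⟨k, hk, rfl, h⟩; omega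
  rw [hfibres, measureReal_biUnion_finset]
  · refine sum_congr rfl fun k _ => ?_
    simp only [measureReal_def, ← ENNReal.toReal_mul]
    exact congrArg ENNReal.toReal (hXZ.measure_inter_preimage_eq_mul {k} {t - k}
      (measurableSet_singleton _) (measurableSet_singleton _))
  · intro i _ j _ hij
    exact Set.disjoint_left.2 fun ω hi hj => hij (hi.1.symm.trans hj.1)
  · exact fun k _ => (hX (measurableSet_singleton _)).inter (hZ (measurableSet_singleton _))

lemma crossLogConcave_measureReal_finsetSum_eq [IsFiniteMeasure μ] {ι : Type*} [DecidableEq ι]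
    (α : ι → ℝ) (hα : ∀ i, 0 ≤ α i ∧ α i ≤ 1) (Y : ι → Ω → ℕ) (hmeas : ∀ i, Measurable (Y i))
    (hindep : iIndepFun Y μ) (hgeom : ∀ i k, μ.real {ω | Y i ω = k} = α i ^ k * (1 - α i))
    (s : Finset ι) :
    CrossLogConcave fun t => μ.real {ω | ∑ i ∈ s, Y i ω = t} := by
  induction s using Finset.induction_on with
  | empty =>
    intro n m _
    dsimp only
    have : {ω : Ω | ∑ i ∈ (∅ : Finset ι), Y i ω = n + 1} = ∅ := by simp
    rw [this, measureReal_empty, zero_mul]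
    positivity
  | @insert i s hi ih =>
    have hlaw : (fun t => μ.real {ω | ∑ j ∈ insert i s, Y j ω = t}) =
        geomConv (α i) fun t => μ.real {ω | ∑ j ∈ s, Y j ω = t} := by
      funext t
      have hindep' : IndepFun (Y i) (fun ω => ∑ j ∈ s, Y j ω) μ := by
        simpa only [Finset.sum_fn] using (hindep.indepFun_finsetSum_of_notMem hmeas hi).symm
      simp only [sum_insert hi]
      simpa only [geomConv, hgeom] using measureReal_add_eq_sum_mul (hmeas i)
        (Finset.measurable_sum s fun j _ => hmeas j) hindep' t
    rw [hlaw]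
    exact ih.geomConv (hα i).1 (hα i).2 fun _ => measureReal_nonneg

end Probability

/-- The sum of finitely many independent geometric random variables (with possibly
different parameters `α i ∈ [0,1)`) has a log-concave distribution: for every integer
`t ≥ 1`, `P(S = t+1) · P(S = t-1) ≤ P(S = t)^2`. -/
theorem sum_geometric_logConcave {Ω : Type*} [MeasurableSpace Ω]
    (μ : Measure Ω) [IsProbabilityMeasure μ]
    (d : ℕ) (α : Fin d → ℝ) (hα : ∀ i, 0 ≤ α i ∧ α i < 1)
    (Y : Fin d → Ω → ℕ) (hmeas : ∀ i, Measurable (Y i))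
    (hindep : iIndepFun Y μ)
    (hgeom : ∀ i k, μ {ω | Y i ω = k} = ENNReal.ofReal ((α i) ^ k * (1 - α i))) :
    ∀ t : ℕ, 1 ≤ t →
      μ {ω | (∑ i, Y i ω) = t + 1} * μ {ω | (∑ i, Y i ω) = t - 1} ≤
        (μ {ω | (∑ i, Y i ω) = t}) ^ 2 := by
  intro t ht
  have hgeom' : ∀ i k, μ.real {ω | Y i ω = k} = α i ^ k * (1 - α i) := fun i k => by
    rw [measureReal_def, hgeom, ENNReal.toReal_ofReal
      (mul_nonneg (pow_nonneg (hα i).1 k) (sub_nonneg.2 (hα i).2.le))]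
  have hlc := crossLogConcave_measureReal_finsetSum_eq α
    (fun i => ⟨(hα i).1, (hα i).2.le⟩) Y hmeas hindep hgeom' univ t (t - 1)
    (Nat.sub_le t 1)
  rw [Nat.sub_add_cancel ht] at hlc
  rw [← ofReal_measureReal, ← ofReal_measureReal, ← ofReal_measureReal,
    ← ENNReal.ofReal_mul measureReal_nonneg, ← ENNReal.ofReal_pow measureReal_nonneg]
  exact ENNReal.ofReal_le_ofReal (hlc.trans_eq (sq _).symm)
end

section
/- Let X_1, ..., X_n be independent geometric random variables where X_i has parameter p_i, with means μ_i = p_i/(1-p_i), variances σ_i^2 = μ_i(1+μ_i), and set μ = ∑ μ_i, σ^2 = ∑ σ_i^2, μ_0 = max_i μ_i. Then for any t with 0 ≤ t ≤ (1 + 1/(2μ_0)) log(1 + 1/(2μ_0)), P(∑ X_i ≥ μ + 4tσ^2) ≤ exp(-2σ^2 · t · W_0(t)), where W_0 is the Lambert W function satisfying W_0(x)e^{W_0(x)} = x; and for t > (1 + 1/(2μ_0)) log(1 + 1/(2μ_0)), P(∑ X_i ≥ μ + 4tσ^2) ≤ (1 - 1/(1 + 2μ_0))^{2σ^2 t}.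 -/
open MeasureTheory ProbabilityTheory Real

/-! Chernoff's method. A geometric variable of mean `m` has moment generating function
`(1 - m (e^λ - 1))⁻¹`; as long as `x = m (e^λ - 1) ≤ 1/2`, the estimate `(1 - x)⁻¹ ≤ e^(x + x²)`
bounds it by `exp (m λ + 2 m (1 + m) λ² e^λ)`, and `e^λ ≤ 1 + 1/(2μ₀)` ensures `x ≤ 1/2` for
every summand. Markov's inequality for `e^(λ ∑ Xᵢ)` then bounds the tail by
`exp (2σ² (λ² e^λ - 2tλ))`. For small `t` take `λ = W₀(t)`: then `λ e^λ = t` turns the exponent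
into `-2σ² t W₀(t)`, and the constraint on `λ` is the constraint on `t` because `x e^x` is
increasing. For large `t` take `λ = log (1 + 1/(2μ₀))`, whose `e^(-λ)` is `1 - 1/(1 + 2μ₀)`. -/

lemma inv_one_sub_le_exp_add_sq {x : ℝ} (hx₀ : 0 ≤ x) (hx₁ : x ≤ 1 / 2) :
    (1 - x)⁻¹ ≤ exp (x + x ^ 2) := by
  rw [inv_le_iff_one_le_mul₀ (by linarith)]
  have hexp := quadratic_le_exp_of_nonneg (by positivity : 0 ≤ x + x ^ 2)
  nlinarith [mul_le_mul_of_nonneg_left hexp (by linarith : 0 ≤ 1 - x),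
    mul_nonneg (sq_nonneg x) (by nlinarith : 0 ≤ 1 - x - x ^ 2 - x ^ 3)]

lemma exp_sub_one_le_mul_exp (l : ℝ) : exp l - 1 ≤ l * exp l := by
  have h := mul_le_mul_of_nonneg_right (one_sub_le_exp_neg l) (exp_pos l).le
  rw [← exp_add, neg_add_cancel, exp_zero] at h
  linarith

lemma inv_one_sub_mul_exp_sub_one_le {m l : ℝ} (hm : 0 ≤ m) (hl : 0 ≤ l)
    (h : m * (exp l - 1) ≤ 1 / 2) :
    (1 - m * (exp l - 1))⁻¹ ≤ exp (m * l + 2 * (m * (1 + m)) * l ^ 2 * exp l) := by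
  have hu : exp l - 1 ≤ l * exp l := exp_sub_one_le_mul_exp l
  have hu₀ : 0 ≤ exp l - 1 := by linarith [add_one_le_exp l]
  refine (inv_one_sub_le_exp_add_sq (mul_nonneg hm hu₀) h).trans (exp_le_exp.2 ?_)
  have hlin : m * (exp l - 1) ≤ m * l + m * (l ^ 2 * exp l) := by
    rw [← mul_add]; gcongr; nlinarith
  have hsq : (m * (exp l - 1)) ^ 2 ≤ m * (1 + m) * (l ^ 2 * exp l) := by
    calc (m * (exp l - 1)) ^ 2 ≤ (m * (l * exp l)) ^ 2 := by gcongr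
      _ = m * exp l * (m * (l ^ 2 * exp l)) := by ring
      _ ≤ (1 + m) * (m * (l ^ 2 * exp l)) := by gcongr; linarith
      _ = m * (1 + m) * (l ^ 2 * exp l) := by ring
  nlinarith [mul_nonneg (mul_nonneg hm hm) (mul_nonneg (sq_nonneg l) (exp_pos l).le)]

lemma strictMonoOn_mul_exp : StrictMonoOn (fun x : ℝ => x * exp x) (Set.Ici 0) :=
  fun _ ha _ _ hab => mul_lt_mul hab (exp_le_exp.2 hab.le) (exp_pos _) (ha.trans hab.le)

lemma mul_exp_sub_one_le_half {m M l : ℝ} (hm : 0 ≤ m) (hmM : m ≤ M) (hl : 0 ≤ l)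
    (hle : exp l ≤ 1 + 1 / (2 * M)) : m * (exp l - 1) ≤ 1 / 2 := by
  have hM : M * (1 / (2 * M)) ≤ 1 / 2 := by
    rcases eq_or_ne M 0 with rfl | hM
    · norm_num
    · exact (by field_simp : M * (1 / (2 * M)) = 1 / 2).le
  calc m * (exp l - 1) ≤ M * (1 / (2 * M)) :=
        mul_le_mul hmM (by linarith) (by linarith [add_one_le_exp l]) (hm.trans hmM)
    _ ≤ 1 / 2 := hM

lemma exp_neg_log_one_add_one_div_two_mul {M : ℝ} (hM : 0 < M) :
    exp (-log (1 + 1 / (2 * M))) = 1 - 1 / (1 + 2 * M) := by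
  rw [exp_neg, exp_log (by positivity)]
  field_simp
  ring

section Geometric

variable {q : unitInterval} {l : ℝ}

lemma hasSum_geometricMeasure_mul_exp_mul (hl : (1 - q) * exp l < 1) :
    HasSum (fun n : ℕ => (1 - q : ℝ) ^ n * q * exp (l * n)) (q / (1 - (1 - q) * exp l)) := by
  have h :=
    (hasSum_geometric_of_lt_one (mul_nonneg (by grind) (exp_pos l).le) hl).mul_right (q : ℝ)
  rw [← div_eq_inv_mul] at h
  refine h.congr_fun fun n => ?_
  rw [mul_pow, ← exp_nat_mul, mul_comm l]
  ring

lemma integrable_exp_mul_geometricMeasure (hq : q ≠ 0) (hl : (1 - q) * exp l < 1) :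
    Integrable (fun n : ℕ => exp (l * n)) (geometricMeasure q) := by
  rw [integrable_geometricMeasure_iff hq]
  simpa only [norm_of_nonneg (exp_pos _).le] using
    (hasSum_geometricMeasure_mul_exp_mul hl).summable

lemma integral_exp_mul_geometricMeasure (hq : q ≠ 0) (hl : (1 - q) * exp l < 1) :
    ∫ n, exp (l * n) ∂geometricMeasure q = q / (1 - (1 - q) * exp l) := by
  rw [integral_geometricMeasure hq]
  exact (hasSum_geometricMeasure_mul_exp_mul hl).tsum_eq

variable {Ω : Type*} [MeasurableSpace Ω] {μ : Measure Ω} {X : Ω → ℕ}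

lemma ProbabilityTheory.HasLaw.integrable_exp_mul_of_geometricMeasure
    (hX : HasLaw X (geometricMeasure q) μ) (hq : q ≠ 0) (hl : (1 - q) * exp l < 1) :
    Integrable (fun ω => exp (l * X ω)) μ :=
  (integrable_map_measure (g := fun n : ℕ => exp (l * n)) (by fun_prop) hX.aemeasurable).mp
    (hX.map_eq ▸ integrable_exp_mul_geometricMeasure hq hl)

lemma ProbabilityTheory.HasLaw.mgf_of_geometricMeasure (hX : HasLaw X (geometricMeasure q) μ)
    (hq : q ≠ 0) (hl : (1 - q) * exp l < 1) :
    mgf (fun ω => (X ω : ℝ)) μ l = q / (1 - (1 - q) * exp l) :=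
  (hX.integral_comp (f := fun n : ℕ => exp (l * n)) (by fun_prop)).trans
    (integral_exp_mul_geometricMeasure hq hl)

lemma hasLaw_geometricMeasure_of_measure_eq (hX : Measurable X) (hq : q ≠ 0)
    (hX_pmf : ∀ k, μ {ω | X ω = k} = ENNReal.ofReal ((1 - q) ^ k * q)) :
    HasLaw X (geometricMeasure q) μ where
  map_eq := Measure.ext_of_singleton fun k => by
    rw [Measure.map_apply hX (measurableSet_singleton k), geometricMeasure_singleton hq]
    exact hX_pmf k

lemma one_sub_mul_exp_lt_one (hq : q ≠ 0) (hlq : (1 - q) / q * (exp l - 1) ≤ 1 / 2) :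
    (1 - q) * exp l < 1 := by
  have hq₀ : (0 : ℝ) < q := unitInterval.pos_iff_ne_zero.2 hq
  rw [div_mul_eq_mul_div, div_le_iff₀ hq₀] at hlq
  linarith

lemma ProbabilityTheory.HasLaw.mgf_le_of_geometricMeasure
    (hX : HasLaw X (geometricMeasure q) μ) (hq : q ≠ 0) (hl : 0 ≤ l)
    (hlq : (1 - q) / q * (exp l - 1) ≤ 1 / 2) :
    mgf (fun ω => (X ω : ℝ)) μ l ≤
      exp ((1 - q) / q * l + 2 * ((1 - q) / q * (1 + (1 - q) / q)) * l ^ 2 * exp l) := by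
  have hq₀ : (q : ℝ) ≠ 0 := by simpa using hq
  have hmgf : q / (1 - (1 - q) * exp l) = (1 - (1 - q) / q * (exp l - 1))⁻¹ := by
    field_simp
    ring
  rw [hX.mgf_of_geometricMeasure hq (one_sub_mul_exp_lt_one hq hlq), hmgf]
  exact inv_one_sub_mul_exp_sub_one_le (div_nonneg (by grind) (by grind)) hl hlq

end Geometric

lemma measureReal_sum_ge_le_of_mgf_le {ι Ω : Type*} [Fintype ι] [MeasurableSpace Ω]
    {μ : Measure Ω} [IsFiniteMeasure μ] {Y : ι → Ω → ℝ} (hY : ∀ i, Measurable (Y i))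
    (hindep : iIndepFun Y μ) {l : ℝ} (hl : 0 ≤ l)
    (hint : ∀ i, Integrable (fun ω => exp (l * Y i ω)) μ) {c : ι → ℝ}
    (hc : ∀ i, mgf (Y i) μ l ≤ exp (c i)) (a : ℝ) :
    μ.real {ω | a ≤ ∑ i, Y i ω} ≤ exp (-l * a + ∑ i, c i) :=
  calc μ.real {ω | a ≤ ∑ i, Y i ω} = μ.real {ω | a ≤ (∑ i, Y i) ω} := by
        simp only [Finset.sum_apply]
    _ ≤ exp (-l * a) * mgf (∑ i, Y i) μ l :=
        measure_ge_le_exp_mul_mgf a hl (hindep.integrable_exp_mul_sum hY fun i _ => hint i)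
    _ ≤ exp (-l * a) * ∏ i, exp (c i) := by
        rw [hindep.mgf_sum hY]
        gcongr with i
        exacts [fun i _ => mgf_nonneg, hc i]
    _ = exp (-l * a + ∑ i, c i) := by rw [exp_add, exp_sum]

lemma measure_sum_ge_le_of_geometric {ι Ω : Type*} [Fintype ι] [MeasurableSpace Ω]
    {μ : Measure Ω} [IsFiniteMeasure μ] {p : ι → ℝ} (hp : ∀ i, 0 ≤ p i ∧ p i < 1)
    {X : ι → Ω → ℕ} (hX : ∀ i, Measurable (X i)) (hindep : iIndepFun X μ)
    (hgeom : ∀ i k, μ {ω | X i ω = k} = ENNReal.ofReal (p i ^ k * (1 - p i)))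
    {l : ℝ} (hl : 0 ≤ l) (hlp : ∀ i, p i / (1 - p i) * (exp l - 1) ≤ 1 / 2) (a : ℝ) :
    μ {ω | a ≤ ∑ i, (X i ω : ℝ)} ≤ ENNReal.ofReal (exp (-l * a + ∑ i,
      (p i / (1 - p i) * l + 2 * (p i / (1 - p i) * (1 + p i / (1 - p i))) * l ^ 2 * exp l))) := by
  -- `geometricMeasure q` counts the failures before the first success of probability `q`.
  let q i : unitInterval := ⟨1 - p i, by linarith [hp i], by linarith [hp i]⟩
  have hq i : q i ≠ 0 := by
    rw [ne_eq, ← Subtype.coe_inj]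
    exact (sub_pos.2 (hp i).2).ne'
  have hq_mean i : (1 - (q i : ℝ)) / q i = p i / (1 - p i) := by rw [sub_sub_cancel]
  have hlaw i : HasLaw (X i) (geometricMeasure (q i)) μ :=
    hasLaw_geometricMeasure_of_measure_eq (hX i) (hq i) (by simpa [q] using hgeom i)
  have hlq i : (1 - (q i : ℝ)) / q i * (exp l - 1) ≤ 1 / 2 := hq_mean i ▸ hlp i
  rw [← ENNReal.ofReal_toReal (measure_ne_top μ _)]
  refine ENNReal.ofReal_le_ofReal (measureReal_sum_ge_le_of_mgf_le (Y := fun i ω => X i ω)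
    (fun i => measurable_from_nat.comp (hX i)) (hindep.comp _ fun _ => measurable_from_nat) hl
    (fun i => (hlaw i).integrable_exp_mul_of_geometricMeasure (hq i)
      (one_sub_mul_exp_lt_one (hq i) (hlq i))) (fun i => ?_) a)
  simpa only [hq_mean] using (hlaw i).mgf_le_of_geometricMeasure (hq i) hl (hlq i)

lemma measure_sum_ge_mean_add_le_of_geometric {ι Ω : Type*} [Fintype ι] [MeasurableSpace Ω]
    {μ : Measure Ω} [IsFiniteMeasure μ] {p : ι → ℝ} (hp : ∀ i, 0 ≤ p i ∧ p i < 1)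
    {X : ι → Ω → ℕ} (hX : ∀ i, Measurable (X i)) (hindep : iIndepFun X μ)
    (hgeom : ∀ i k, μ {ω | X i ω = k} = ENNReal.ofReal (p i ^ k * (1 - p i)))
    {M : ℝ} (hM : ∀ i, p i / (1 - p i) ≤ M) {l : ℝ} (hl : 0 ≤ l)
    (hle : exp l ≤ 1 + 1 / (2 * M)) (t : ℝ) :
    μ {ω | (∑ i, p i / (1 - p i)) + 4 * t * (∑ i, p i / (1 - p i) * (1 + p i / (1 - p i))) ≤
        ∑ i, (X i ω : ℝ)} ≤
      ENNReal.ofReal (exp (2 * (∑ i, p i / (1 - p i) * (1 + p i / (1 - p i))) *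
        (l ^ 2 * exp l - 2 * t * l))) := by
  have hm i : 0 ≤ p i / (1 - p i) := div_nonneg (hp i).1 (by linarith [hp i])
  convert measure_sum_ge_le_of_geometric hp hX hindep hgeom hl
    (fun i => mul_exp_sub_one_le_half (hm i) (hM i) hl hle) _ using 4
  simp only [Finset.sum_add_distrib, ← Finset.sum_mul, ← Finset.mul_sum]
  ring

/-- Tail bound for sums of independent geometric random variables, in terms of the
Lambert `W₀` function. With `μᵢ = pᵢ/(1-pᵢ)`, `σᵢ² = μᵢ(1+μᵢ)`, `μ = ∑ μᵢ`,
`σ² = ∑ σᵢ²` and `μ₀ = maxᵢ μᵢ`: for `0 ≤ t ≤ (1+1/(2μ₀))log(1+1/(2μ₀))`,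
`P(∑ Xᵢ ≥ μ + 4tσ²) ≤ exp(-2σ²·t·W₀(t))`, and for larger `t`,
`P(∑ Xᵢ ≥ μ + 4tσ²) ≤ (1 - 1/(1+2μ₀))^(2σ²t)`. -/
theorem geometric_sum_tail_bound {Ω : Type*} [MeasurableSpace Ω]
    (μ : Measure Ω) [IsProbabilityMeasure μ]
    (n : ℕ) (p : Fin n → ℝ) (hp : ∀ i, 0 ≤ p i ∧ p i < 1)
    (X : Fin n → Ω → ℕ) (hmeas : ∀ i, Measurable (X i))
    (hindep : iIndepFun X μ)
    (hgeom : ∀ i k, μ {ω | X i ω = k} = ENNReal.ofReal ((p i) ^ k * (1 - p i)))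
    (W : ℝ → ℝ) (hW : ∀ x, 0 ≤ x → 0 ≤ W x ∧ W x * Real.exp (W x) = x)
    (μ₀ : ℝ) (hμ₀ : IsGreatest (Set.range fun i => p i / (1 - p i)) μ₀)
    (t : ℝ) (ht : 0 ≤ t) :
    (t ≤ (1 + 1 / (2 * μ₀)) * Real.log (1 + 1 / (2 * μ₀)) →
      μ {ω | (∑ i, p i / (1 - p i)) +
          4 * t * (∑ i, (p i / (1 - p i)) * (1 + p i / (1 - p i))) ≤
          ∑ i, (X i ω : ℝ)} ≤
        ENNReal.ofReal
          (Real.exp (-(2 * (∑ i, (p i / (1 - p i)) * (1 + p i / (1 - p i))) * t * W t)))) ∧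
    ((1 + 1 / (2 * μ₀)) * Real.log (1 + 1 / (2 * μ₀)) < t →
      μ {ω | (∑ i, p i / (1 - p i)) +
          4 * t * (∑ i, (p i / (1 - p i)) * (1 + p i / (1 - p i))) ≤
          ∑ i, (X i ω : ℝ)} ≤
        ENNReal.ofReal
          ((1 - 1 / (1 + 2 * μ₀)) ^
            (2 * (∑ i, (p i / (1 - p i)) * (1 + p i / (1 - p i))) * t))) := by
  have hm i : 0 ≤ p i / (1 - p i) := div_nonneg (hp i).1 (by linarith [hp i])
  have hmμ₀ i : p i / (1 - p i) ≤ μ₀ := hμ₀.2 ⟨i, rfl⟩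
  have hμ₀_nonneg : 0 ≤ μ₀ := by
    obtain ⟨i, rfl⟩ := hμ₀.1
    exact hm i
  have tail {l : ℝ} (hl : 0 ≤ l) (hle : exp l ≤ 1 + 1 / (2 * μ₀)) :=
    measure_sum_ge_mean_add_le_of_geometric hp hmeas hindep hgeom hmμ₀ hl hle t
  set S := ∑ i, p i / (1 - p i) * (1 + p i / (1 - p i))
  set L := log (1 + 1 / (2 * μ₀))
  have hL : 0 ≤ L := log_nonneg (by simp; positivity)
  have hexpL : exp L = 1 + 1 / (2 * μ₀) := exp_log (by positivity)
  constructor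
  · intro htL
    obtain ⟨hW₀, hWt⟩ := hW t ht
    have hWL : W t ≤ L :=
      (strictMonoOn_mul_exp.le_iff_le hW₀ hL).1 (by simp only [hWt, hexpL]; linarith)
    refine (tail hW₀ (hexpL ▸ exp_le_exp.2 hWL)).trans_eq ?_
    congr 2
    linear_combination 2 * S * W t * hWt
  · intro htL
    rcases hμ₀_nonneg.eq_or_lt with hμ₀_zero | hμ₀_pos
    · -- all means vanish, and the right-hand side is `0 ^ 0 = 1`
      have hS_zero : S = 0 := Finset.sum_eq_zero fun i _ => by
        rw [le_antisymm ((hmμ₀ i).trans hμ₀_zero.ge) (hm i), zero_mul]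
      simp only [hS_zero, mul_zero, zero_mul, rpow_zero, ENNReal.ofReal_one]
      exact prob_le_one
    have hS : 0 ≤ S := Finset.sum_nonneg fun i _ => mul_nonneg (hm i) (by linarith [hm i])
    have hLt : L * exp L ≤ t := by rw [hexpL]; linarith
    rw [← exp_neg_log_one_add_one_div_two_mul hμ₀_pos, ← exp_mul]
    refine (tail hL hexpL.le).trans (ENNReal.ofReal_le_ofReal (exp_le_exp.2 ?_))
    nlinarith [mul_nonneg (mul_nonneg hS hL) (sub_nonneg.2 hLt)]
end

section
/- Let ψ(λ) = log E[e^{λS}] be the cumulant generating function of a sum S of independent geometric random variables Y_1, ..., Y_d with parameters α_i, defined where all α_i e^λ < 1. Then ψ''(λ) ≥ ψ'(λ) for all λ in the domain. -/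
/-!
Summing the geometric series, a geometric variable with parameter `a` has
`E[e^{xY}] = (1 - a) / (1 - a e^x)`, and independence turns `ψ` into a sum of such logarithms.
With `tᵢ = αᵢ e^λ` this gives `ψ' = ∑ tᵢ / (1 - tᵢ)` and `ψ'' = ∑ tᵢ / (1 - tᵢ)²`, and the
inequality holds termwise because `0 < 1 - tᵢ ≤ 1`.
-/

open MeasureTheory ProbabilityTheory Real Filter Topology

/-- `log E[e^{xY}]` for `P(Y = k) = a^k (1 - a)`, where `a e^x < 1`. -/
noncomputable def geomCgf (a x : ℝ) : ℝ := log (1 - a) - log (1 - a * exp x)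

section Geometric

variable {Ω : Type*} [MeasurableSpace Ω] {μ : Measure Ω}

lemma mgf_natCast_of_geometric {a : ℝ} (ha₀ : 0 ≤ a) (ha₁ : a ≤ 1) {Y : Ω → ℕ}
    (hY : Measurable Y) (hgeom : ∀ k, μ {ω | Y ω = k} = ENNReal.ofReal (a ^ k * (1 - a)))
    {x : ℝ} (hx : a * exp x < 1) :
    mgf (fun ω => (Y ω : ℝ)) μ x = (1 - a) / (1 - a * exp x) := by
  set ν := μ.map Y
  have hν : ∀ k, ν {k} = ENNReal.ofReal (a ^ k * (1 - a)) := fun k => by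
    rw [Measure.map_apply hY (measurableSet_singleton k)]
    exact hgeom k
  have hterm : ∀ k : ℕ, (ν {k}).toReal * exp (x * k) = (1 - a) * (a * exp x) ^ k := by
    intro k
    rw [hν, ENNReal.toReal_ofReal (mul_nonneg (pow_nonneg ha₀ k) (by linarith)), mul_comm x,
      exp_nat_mul]
    ring
  have hsum : Summable fun k : ℕ => (1 - a) * (a * exp x) ^ k :=
    (summable_geometric_of_lt_one (by positivity) hx).mul_left _
  calc mgf (fun ω => (Y ω : ℝ)) μ x
      = ∫ k, exp (x * k) ∂Measure.sum fun k => ν {k} • Measure.dirac k := by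
        rw [Measure.sum_smul_dirac, integral_map hY.aemeasurable .of_discrete]; rfl
    _ = ∑' k : ℕ, (1 - a) * (a * exp x) ^ k := by
        rw [integral_sum_dirac_eq_tsum (fun k => by simp [hν])]
        · simp only [smul_eq_mul, hterm]
        · simpa only [norm_of_nonneg (exp_pos _).le, hterm] using hsum
    _ = (1 - a) / (1 - a * exp x) := by
        rw [tsum_mul_left, tsum_geometric_of_lt_one (by positivity) hx, div_eq_mul_inv]

lemma mgf_sum_natCast_of_geometric {ι : Type*} [Fintype ι] {α : ι → ℝ}
    (hα : ∀ i, 0 ≤ α i ∧ α i < 1) {Y : ι → Ω → ℕ} (hY : ∀ i, Measurable (Y i))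
    (hindep : iIndepFun Y μ)
    (hgeom : ∀ i k, μ {ω | Y i ω = k} = ENNReal.ofReal (α i ^ k * (1 - α i)))
    {x : ℝ} (hx : ∀ i, α i * exp x < 1) :
    mgf (fun ω => ∑ i, (Y i ω : ℝ)) μ x = ∏ i, (1 - α i) / (1 - α i * exp x) := by
  have hindep' : iIndepFun (fun i ω => (Y i ω : ℝ)) μ :=
    hindep.comp (fun _ n => (n : ℝ)) fun _ => measurable_from_top
  have hsum : (fun ω => ∑ i, (Y i ω : ℝ)) = ∑ i, fun ω => (Y i ω : ℝ) := by
    ext ω; simp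
  rw [hsum, hindep'.mgf_sum (fun i => measurable_from_top.comp (hY i))]
  exact Finset.prod_congr rfl fun i _ =>
    mgf_natCast_of_geometric (hα i).1 (hα i).2.le (hY i) (hgeom i) (hx i)

lemma cgf_sum_natCast_of_geometric {ι : Type*} [Fintype ι] {α : ι → ℝ}
    (hα : ∀ i, 0 ≤ α i ∧ α i < 1) {Y : ι → Ω → ℕ} (hY : ∀ i, Measurable (Y i))
    (hindep : iIndepFun Y μ)
    (hgeom : ∀ i k, μ {ω | Y i ω = k} = ENNReal.ofReal (α i ^ k * (1 - α i)))
    {x : ℝ} (hx : ∀ i, α i * exp x < 1) :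
    cgf (fun ω => ∑ i, (Y i ω : ℝ)) μ x = ∑ i, geomCgf (α i) x := by
  have h₀ : ∀ i, 1 - α i ≠ 0 := fun i => by linarith [(hα i).2]
  have h₁ : ∀ i, 1 - α i * exp x ≠ 0 := fun i => by linarith [hx i]
  rw [cgf, mgf_sum_natCast_of_geometric hα hY hindep hgeom hx,
    log_prod fun i _ => div_ne_zero (h₀ i) (h₁ i)]
  exact Finset.sum_congr rfl fun i _ => log_div (h₀ i) (h₁ i)

end Geometric

lemma hasDerivAt_geomCgf {a x : ℝ} (hx : a * exp x < 1) :
    HasDerivAt (geomCgf a) (a * exp x / (1 - a * exp x)) x := by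
  have h := (((hasDerivAt_exp x).const_mul a).const_sub 1).log (by linarith)
  exact (h.const_sub (log (1 - a))).congr_deriv (by ring)

lemma hasDerivAt_mul_exp_div_one_sub_mul_exp {a x : ℝ} (hx : a * exp x < 1) :
    HasDerivAt (fun y => a * exp y / (1 - a * exp y)) (a * exp x / (1 - a * exp x) ^ 2) x := by
  have hne : 1 - a * exp x ≠ 0 := by linarith
  refine (((hasDerivAt_exp x).const_mul a).fun_div
    (((hasDerivAt_exp x).const_mul a).const_sub 1) hne).congr_deriv ?_
  field_simp
  ring

lemma div_one_sub_le_div_one_sub_sq {t : ℝ} (h₀ : 0 ≤ t) (h₁ : t < 1) :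
    t / (1 - t) ≤ t / (1 - t) ^ 2 := by
  have hpos : 0 < 1 - t := by linarith
  refine div_le_div_of_nonneg_left h₀ (by positivity) ?_
  nlinarith

theorem cgf_second_deriv_ge_first_general {Ω : Type*} [MeasurableSpace Ω]
    (μ : Measure Ω)
    (d : ℕ) (α : Fin d → ℝ) (hα : ∀ i, 0 ≤ α i ∧ α i < 1)
    (Y : Fin d → Ω → ℕ) (hmeas : ∀ i, Measurable (Y i))
    (hindep : iIndepFun Y μ)
    (hgeom : ∀ i k, μ {ω | Y i ω = k} = ENNReal.ofReal ((α i) ^ k * (1 - α i)))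
    (lam : ℝ) (hdom : ∀ i, α i * Real.exp lam < 1) :
    deriv (fun x => Real.log (∫ ω, Real.exp (x * ∑ i, (Y i ω : ℝ)) ∂μ)) lam ≤
      deriv (deriv (fun x => Real.log (∫ ω, Real.exp (x * ∑ i, (Y i ω : ℝ)) ∂μ))) lam := by
  show deriv (cgf (fun ω => ∑ i, (Y i ω : ℝ)) μ) lam ≤
    deriv (deriv (cgf (fun ω => ∑ i, (Y i ω : ℝ)) μ)) lam
  have hdom_nhds : ∀ᶠ x in 𝓝 lam, ∀ i, α i * exp x < 1 := eventually_all.2 fun i =>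
    (continuous_const.mul continuous_exp).continuousAt.eventually_lt continuousAt_const (hdom i)
  have hcgf : cgf (fun ω => ∑ i, (Y i ω : ℝ)) μ =ᶠ[𝓝 lam] fun x => ∑ i, geomCgf (α i) x :=
    hdom_nhds.mono fun x hx => cgf_sum_natCast_of_geometric hα hmeas hindep hgeom hx
  have hderiv : deriv (cgf (fun ω => ∑ i, (Y i ω : ℝ)) μ) =ᶠ[𝓝 lam]
      fun x => ∑ i, α i * exp x / (1 - α i * exp x) := by
    filter_upwards [hcgf.eventuallyEq_nhds, hdom_nhds] with x hcgf_x hx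
    rw [hcgf_x.deriv_eq]
    exact (HasDerivAt.fun_sum fun i _ => hasDerivAt_geomCgf (hx i)).deriv
  have hderiv₂ : deriv (deriv (cgf (fun ω => ∑ i, (Y i ω : ℝ)) μ)) lam =
      ∑ i, α i * exp lam / (1 - α i * exp lam) ^ 2 := by
    rw [hderiv.deriv_eq]
    exact (HasDerivAt.fun_sum fun i _ => hasDerivAt_mul_exp_div_one_sub_mul_exp (hdom i)).deriv
  rw [hderiv.eq_of_nhds, hderiv₂]
  exact Finset.sum_le_sum fun i _ =>
    div_one_sub_le_div_one_sub_sq (mul_nonneg (hα i).1 (exp_pos lam).le) (hdom i)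

/-- For the cumulant generating function `ψ(λ) = log E[e^{λS}]` of a sum `S` of
independent geometric random variables with parameters `αᵢ`, one has
`ψ''(λ) ≥ ψ'(λ)` wherever all `αᵢ e^λ < 1`. -/
theorem cgf_second_deriv_ge_first {Ω : Type*} [MeasurableSpace Ω]
    (μ : Measure Ω) [IsProbabilityMeasure μ]
    (d : ℕ) (α : Fin d → ℝ) (hα : ∀ i, 0 ≤ α i ∧ α i < 1)
    (Y : Fin d → Ω → ℕ) (hmeas : ∀ i, Measurable (Y i))
    (hindep : iIndepFun Y μ)
    (hgeom : ∀ i k, μ {ω | Y i ω = k} = ENNReal.ofReal ((α i) ^ k * (1 - α i)))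
    (lam : ℝ) (hdom : ∀ i, α i * Real.exp lam < 1) :
    deriv (fun x => Real.log (∫ ω, Real.exp (x * ∑ i, (Y i ω : ℝ)) ∂μ)) lam ≤
      deriv (deriv (fun x => Real.log (∫ ω, Real.exp (x * ∑ i, (Y i ω : ℝ)) ∂μ))) lam :=
  cgf_second_deriv_ge_first_general μ d α hα Y hmeas hindep hgeom lam hdom
end
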